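/- Summed gradient bound for gradient descent: let E be a real inner product space, f : E → ℝ differentiable with K-Lipschitz gradient (K > 0) and bounded below by c ∈ ℝ. Fix a step size η with 0 < η ≤ 1/K and define the iterates x₀ ∈ E, x_{t+1} = x_t − η·∇f(x_t). Then for every T ∈ ℕ, (η/2)·∑_{t=0}^{T−1} ‖∇f(x_t)‖² ≤ f(x₀) − c. -/

import Mathlib

/-! Along the segment from `x` to `x + v`, the Lipschitz bound on `∇f` makes
`s ↦ f (x + s • v) - s ⟪∇f x, v⟫ - K s² ‖v‖² / 2` antitone, which gives the descent lemma
`f (x + v) ≤ f x + ⟪∇f x, v⟫ + K ‖v‖² / 2`. For the step `v = -η ∇f x` with `K η ≤ 1` this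
decreases `f` by at least `η ‖∇f x‖² / 2`; summing over the iterates telescopes to
`f x₀ - f x_T ≤ f x₀ - c`. -/

open InnerProductSpace Set Finset

section

variable {E : Type*} [NormedAddCommGroup E] [InnerProductSpace ℝ E] [CompleteSpace E]
  {f : E → ℝ}

theorem DifferentiableAt.hasDerivAt_comp_add_smul {x v : E} {t : ℝ}
    (hf : DifferentiableAt ℝ f (x + t • v)) :
    HasDerivAt (fun s : ℝ => f (x + s • v)) ⟪gradient f (x + t • v), v⟫_ℝ t := by
  have hline : HasDerivAt (fun s : ℝ => x + s • v) v t := by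
    simpa using ((hasDerivAt_id t).smul_const v).const_add x
  simpa [Function.comp_def] using hf.hasGradientAt.hasFDerivAt.comp_hasDerivAt t hline

theorem image_add_le_of_gradient_lipschitz {K : ℝ} (hf : Differentiable ℝ f) (x v : E)
    (hlip : ∀ y, ‖gradient f y - gradient f x‖ ≤ K * ‖y - x‖) :
    f (x + v) ≤ f x + ⟪gradient f x, v⟫_ℝ + K / 2 * ‖v‖ ^ 2 := by
  set g : ℝ → ℝ := fun s => f (x + s • v) - s * ⟪gradient f x, v⟫_ℝ - K / 2 * s ^ 2 * ‖v‖ ^ 2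
  set g' : ℝ → ℝ := fun s => ⟪gradient f (x + s • v), v⟫_ℝ - ⟪gradient f x, v⟫_ℝ - K * s * ‖v‖ ^ 2
  have hderiv (s : ℝ) : HasDerivAt g (g' s) s := by
    have := (((hf (x + s • v)).hasDerivAt_comp_add_smul).sub ((hasDerivAt_id s).mul_const
      ⟪gradient f x, v⟫_ℝ)).sub (((hasDerivAt_pow 2 s).const_mul (K / 2)).mul_const (‖v‖ ^ 2))
    exact this.congr_deriv (by simp only [g', one_mul]; ring)
  have hg'_nonpos (s : ℝ) (hs : 0 ≤ s) : g' s ≤ 0 := by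
    have hlip_s : ‖gradient f (x + s • v) - gradient f x‖ ≤ K * (s * ‖v‖) := by
      simpa [norm_smul, abs_of_nonneg hs] using hlip (x + s • v)
    have hcs := real_inner_le_norm (gradient f (x + s • v) - gradient f x) v
    rw [inner_sub_left] at hcs
    nlinarith [mul_le_mul_of_nonneg_right hlip_s (norm_nonneg v)]
  have hanti : AntitoneOn g (Icc 0 1) := by
    refine antitoneOn_of_hasDerivWithinAt_nonpos (convex_Icc 0 1)
      (fun s _ => (hderiv s).continuousAt.continuousWithinAt)
      (fun s _ => (hderiv s).hasDerivWithinAt) fun s hs => hg'_nonpos s ?_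
    rw [interior_Icc] at hs
    exact hs.1.le
  have h10 : g 1 ≤ g 0 := hanti (by simp) (by simp) zero_le_one
  simp only [g, one_smul, zero_smul, add_zero] at h10
  linarith

theorem image_sub_smul_gradient_le {K η : ℝ} (hf : Differentiable ℝ f) (x : E)
    (hlip : ∀ y, ‖gradient f y - gradient f x‖ ≤ K * ‖y - x‖) (hη : 0 ≤ η) (hKη : K * η ≤ 1) :
    f (x - η • gradient f x) ≤ f x - η / 2 * ‖gradient f x‖ ^ 2 := by
  have hdescent := image_add_le_of_gradient_lipschitz hf x (-(η • gradient f x)) hlip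
  rw [← sub_eq_add_neg, inner_neg_right, real_inner_smul_right, real_inner_self_eq_norm_sq,
    norm_neg, norm_smul, Real.norm_eq_abs, abs_of_nonneg hη] at hdescent
  nlinarith [mul_le_mul_of_nonneg_right hKη (mul_nonneg hη (sq_nonneg ‖gradient f x‖))]

end

theorem stmt_9_general {E : Type*} [NormedAddCommGroup E] [InnerProductSpace ℝ E]
    [CompleteSpace E]
    (f : E → ℝ) (K : ℝ)
    (hf : Differentiable ℝ f)
    (hlip : ∀ x y : E, ‖gradient f x - gradient f y‖ ≤ K * ‖x - y‖)
    (c : ℝ) (hc : ∀ y : E, c ≤ f y)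
    (η : ℝ) (hη : 0 < η) (hηK : η ≤ 1 / K)
    (x : ℕ → E) (hx : ∀ t, x (t + 1) = x t - η • gradient f (x t)) :
    ∀ T : ℕ, η / 2 * ∑ t ∈ Finset.range T, ‖gradient f (x t)‖ ^ 2 ≤ f (x 0) - c := by
  have hK : 0 < K := one_div_pos.mp (hη.trans_le hηK)
  have hKη : K * η ≤ 1 := by rwa [le_div_iff₀ hK, mul_comm] at hηK
  have hstep (t : ℕ) : η / 2 * ‖gradient f (x t)‖ ^ 2 ≤ f (x t) - f (x (t + 1)) := by
    have := image_sub_smul_gradient_le hf (x t) (fun y => hlip y (x t)) hη.le hKη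
    rw [← hx] at this
    linarith
  intro T
  calc η / 2 * ∑ t ∈ range T, ‖gradient f (x t)‖ ^ 2
      = ∑ t ∈ range T, η / 2 * ‖gradient f (x t)‖ ^ 2 := mul_sum _ _ _
    _ ≤ ∑ t ∈ range T, (f (x t) - f (x (t + 1))) := sum_le_sum fun t _ => hstep t
    _ = f (x 0) - f (x T) := sum_range_sub' _ _
    _ ≤ f (x 0) - c := by linarith [hc (x T)]

/-- Summed gradient bound for gradient descent: with step size `0 < η ≤ 1/K`
and iterates `x_{t+1} = x_t − η·∇f(x_t)`, for every `T`,
`(η/2)·∑_{t<T} ‖∇f(x_t)‖² ≤ f(x₀) − c`, where `c` bounds `f` from below. -/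
theorem stmt_9 {E : Type*} [NormedAddCommGroup E] [InnerProductSpace ℝ E]
    [CompleteSpace E]
    (f : E → ℝ) (K : ℝ) (hK : 0 < K)
    (hf : Differentiable ℝ f)
    (hlip : ∀ x y : E, ‖gradient f x - gradient f y‖ ≤ K * ‖x - y‖)
    (c : ℝ) (hc : ∀ y : E, c ≤ f y)
    (η : ℝ) (hη : 0 < η) (hηK : η ≤ 1 / K)
    (x : ℕ → E) (hx : ∀ t, x (t + 1) = x t - η • gradient f (x t)) :
    ∀ T : ℕ, η / 2 * ∑ t ∈ Finset.range T, ‖gradient f (x t)‖ ^ 2 ≤ f (x 0) - c :=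
  stmt_9_general f K hf hlip c hc η hη hηK x hx
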